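/- arXiv:2210.16165 — 2 statements merged into one kernel-verified Lean document; each statement's English description precedes it below -/
import Mathlib

section
/- There is no weight function w on Z_8 with w(0)=0 such that the map i ↦ (binary expansion based map) makes Z_8 with w isometric to Z_2^3 with the Hamming metric; concretely: there is no bijection φ : Z_8 → Z_2^3 and no function w : Z_8 → ℕ with w(x - y) = d_H(φ(x), φ(y)) for all x, y, where d_H is Hamming distance. -/
/-- The modular Gray map η^s_g : Z_{2^s} → Z_{2^{s-1}} × Z_{2^{s-1}}. -/
def etaG (s : ℕ) (u : ZMod (2^s)) : ZMod (2^(s-1)) × ZMod (2^(s-1)) :=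
  let i := u.val
  if i < 2^(s-2) then ((i : ZMod (2^(s-1))), (i : ZMod (2^(s-1))))
  else if i < 2^(s-1) then (((i - 2^(s-2) : ℕ) : ZMod (2^(s-1))), (i : ZMod (2^(s-1))))
  else if i < 2^(s-1) + 2^(s-2) then
    (((i - 2^(s-2) : ℕ) : ZMod (2^(s-1))), ((i - 2^(s-2) : ℕ) : ZMod (2^(s-1))))
  else (((i - 2^(s-1) : ℕ) : ZMod (2^(s-1))), ((i - 3 * 2^(s-2) : ℕ) : ZMod (2^(s-1))))

/-- The homogeneous weight on Z_{2^s}. -/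
def homWt (s : ℕ) (u : ZMod (2^s)) : ℕ :=
  if u = 0 then 0 else if u.val = 2^(s-1) then 2^(s-1) else 2^(s-2)

/-!
A translation-invariant distance `w (x - y)` is symmetric, so `w (-x) = w x`. Negation pairs
off the nonzero elements of `ZMod 8` except `4`, so among the values `w x` (`x ≠ 0`) at most one
value, namely `w 4`, can occur an odd number of times. Through an isometry these values are the
Hamming distances from `φ 0` to the other seven points of the cube, i.e. `1, 1, 1, 2, 2, 2, 3`,
in which both `1` and `3` occur an odd number of times.
-/

open Finset Function

theorem Finset.card_modEq_card_filter_fixed_of_involutive {α : Type*} [DecidableEq α]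
    {g : α → α} (hg : Involutive g) {s : Finset α} (hs : ∀ x, g x ∈ s ↔ x ∈ s) :
    #s ≡ #{x ∈ s | g x = x} [MOD 2] := by
  let σ : Equiv.Perm s := hg.toPerm.subtypePerm hs
  have hσ : σ ^ 2 ^ 1 = 1 := by
    ext x
    exact hg x
  have hfix : #σ.supportᶜ = #{x ∈ s | g x = x} := by
    refine card_nbij (↑) (fun x hx => ?_) Subtype.val_injective.injOn fun x hx => ?_
    · simp only [coe_compl, Set.mem_compl_iff, mem_coe, Equiv.Perm.mem_support, not_not] at hx
      exact mem_filter.2 ⟨x.2, congrArg Subtype.val hx⟩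
    · simp only [coe_filter, Set.mem_ofPred_eq] at hx
      refine ⟨⟨x, hx.1⟩, ?_, rfl⟩
      rw [mem_coe, mem_compl, Equiv.Perm.mem_support, not_not]
      exact Subtype.ext hx.2
  rw [← hfix, ← Fintype.card_coe s]
  exact (Equiv.Perm.card_compl_support_modEq hσ).symm

theorem card_hammingDist_eq_card_hammingNorm {ι : Type*} {β : ι → Type*} [Fintype ι]
    [DecidableEq ι] [∀ i, Fintype (β i)] [∀ i, DecidableEq (β i)] [∀ i, AddGroup (β i)]
    (a : ∀ i, β i) (k : ℕ) :
    #{v | hammingDist v a = k} = #{v : ∀ i, β i | hammingNorm v = k} :=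
  card_equiv (Equiv.addLeft (-a)) fun v => by
    rw [mem_filter, mem_filter, hammingDist_comm, hammingDist_eq_hammingNorm]
    simp

theorem ZMod.apply_four_eq_of_odd_card_fiber {β : Type*} [DecidableEq β] {f : ZMod 8 → β}
    (hf : ∀ x, f (-x) = f x) {b : β} (h0 : f 0 ≠ b) (hodd : Odd #{x | f x = b}) : f 4 = b := by
  by_contra h4
  have hfixed : ∀ x : ZMod 8, -x = x → x = 0 ∨ x = 4 := by decide
  have hno_fixed : #{x ∈ ({x | f x = b} : Finset (ZMod 8)) | -x = x} = 0 := by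
    refine card_eq_zero.2 (filter_eq_empty_iff.2 fun x hx hneg => ?_)
    rcases hfixed x hneg with rfl | rfl <;> simp_all
  have hmod := card_modEq_card_filter_fixed_of_involutive neg_involutive (s := {x | f x = b})
    (by simp [hf])
  rw [hno_fixed, Nat.modEq_zero_iff_dvd] at hmod
  exact Nat.not_even_iff_odd.2 hodd (even_iff_two_dvd.2 hmod)

theorem no_isometry_Z8_Hamming :
    ¬ ∃ (φ : ZMod 8 → (Fin 3 → ZMod 2)) (w : ZMod 8 → ℕ),
      Function.Bijective φ ∧ ∀ x y : ZMod 8, w (x - y) = hammingDist (φ x) (φ y) := by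
  rintro ⟨φ, w, hφ, hw⟩
  have hw_dist : ∀ x, w x = hammingDist (φ x) (φ 0) := fun x => by simpa using hw x 0
  have hw_zero : w 0 = 0 := by simpa using hw 0 0
  have hw_neg : ∀ x, w (-x) = w x := fun x => by
    rw [← zero_sub, hw, hw_dist, hammingDist_comm]
  have hcard : ∀ k, #{x | w x = k} = #{v : Fin 3 → ZMod 2 | hammingNorm v = k} := fun k => by
    rw [← card_hammingDist_eq_card_hammingNorm (φ 0)]
    exact card_equiv (Equiv.ofBijective φ hφ) fun x => by simp [hw_dist]
  have h1 : w 4 = 1 :=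
    ZMod.apply_four_eq_of_odd_card_fiber hw_neg (by simp [hw_zero]) (by rw [hcard]; decide)
  have h3 : w 4 = 3 :=
    ZMod.apply_four_eq_of_odd_card_fiber hw_neg (by simp [hw_zero]) (by rw [hcard]; decide)
  omega
end

section
/- The composition of s-1 modular Gray maps η^s_g, η^{s-1}_g, ..., η^2_g yields an isometry from Z_{2^s} with homogeneous weight to Z_2^{2^{s-1}} with Hamming weight: for every u in Z_{2^s}, the Hamming weight of the resulting binary vector of length 2^{s-1} equals w_{HW}(u). -/
/-- Iterated modular Gray map: composing η^s_g, η^{s-1}_g, …, η^2_g coordinatewise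
yields a binary vector (as a list over Z_2) of length 2^{s-1}. -/
def iterGray : (s : ℕ) → ZMod (2^s) → List (ZMod 2)
  | 0, _ => []
  | 1, u => [u]
  | (s+2), u => iterGray (s+1) (etaG (s+2) u).1 ++ iterGray (s+1) (etaG (s+2) u).2

/-!
Each Gray map `η^{s+2}_g` splits `u` into two halves whose homogeneous weights add up to
that of `u`; this is checked quarter by quarter on `Z_{2^{s+2}}`. Since the homogeneous weight
on `Z_2` is the Hamming weight, induction on `s` gives the isometry.
-/

lemma homWt_natCast {s n : ℕ} (h : n < 2^(s+1)) :
    homWt (s+1) (n : ZMod (2^(s+1))) =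
      if n = 0 then 0 else if n = 2^s then 2^s else 2^(s-1) := by
  have hval : (n : ZMod (2^(s+1))).val = n := ZMod.val_cast_of_lt h
  simp only [homWt, ← ZMod.val_eq_zero, hval, Nat.add_sub_cancel, show s + 1 - 2 = s - 1 by omega]

theorem homWt_etaG_fst_add_snd (s : ℕ) (u : ZMod (2^(s+2))) :
    homWt (s+1) (etaG (s+2) u).1 + homWt (s+1) (etaG (s+2) u).2 = homWt (s+2) u := by
  have hu : u.val < 4 * 2^s := by simpa [pow_add, mul_comm] using ZMod.val_lt u
  have two_pow_succ : 2^(s+1) = 2 * 2^s := by ring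
  -- for `s = 0` the weight `2^(s-1)` is never attained, so only the other case matters
  have half : 2^s = 1 ∨ 2^s = 2 * 2^(s-1) := by
    rcases s with _ | s
    · simp
    · right; simp [pow_succ, mul_comm]
  have hw : homWt (s+2) u =
      if u.val = 0 then 0 else if u.val = 2^(s+1) then 2^(s+1) else 2^s := by
    simp only [homWt, ← ZMod.val_eq_zero, show s + 2 - 1 = s + 1 by omega, Nat.add_sub_cancel]
  simp only [etaG, show s + 2 - 1 = s + 1 by omega, Nat.add_sub_cancel]
  split_ifs <;>
    · rw [hw, homWt_natCast (by omega)]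
      -- in the first and third quarters both halves are the same cast, rewritten at once
      try rw [homWt_natCast (by omega)]
      split_ifs <;> omega

theorem length_iterGray_succ (s : ℕ) (u : ZMod (2^(s+1))) :
    (iterGray (s+1) u).length = 2^s := by
  induction s with
  | zero => rfl
  | succ s ih => simp only [iterGray, List.length_append, ih, pow_succ, mul_two]

theorem countP_iterGray_succ (s : ℕ) (u : ZMod (2^(s+1))) :
    (iterGray (s+1) u).countP (fun x => decide (x ≠ 0)) = homWt (s+1) u := by
  induction s with
  | zero => revert u; decide
  | succ s ih => rw [iterGray, List.countP_append, ih, ih, homWt_etaG_fst_add_snd]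

theorem iterGray_hamming (s : ℕ) (hs : 2 ≤ s) (u : ZMod (2^s)) :
    (iterGray s u).length = 2^(s-1) ∧
    (iterGray s u).countP (fun x => decide (x ≠ 0)) = homWt s u := by
  obtain ⟨s, rfl⟩ : ∃ t, s = t + 1 := ⟨s - 1, by omega⟩
  exact ⟨length_iterGray_succ s u, countP_iterGray_succ s u⟩
end
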